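/- Let n and p be integers with 0 ≤ p ≤ n − 3. Every connected graph G with n vertices and m = C(n,2) − p edges satisfies tmc(G) ≥ C(n,2) + n − 3p if 0 ≤ p ≤ n/2, and tmc(G) ≥ C(n,2) − p if n/2 < p ≤ n − 3. -/

import Mathlib

/-!
Give one common colour to a set `CE` of edges and a set `CV` of vertices, and a private colour
to every other edge and vertex. This is a TMC-colouring as soon as any two non-adjacent vertices
are joined by a path with edges in `CE` and inner vertices in `CV`, and it uses at least
`m - |CE| + n - |CV| + 1` colours.

Take for `CV` a dominating clique `K` of `G` and for `CE` the edges inside `K` together with one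
edge into `K` from each vertex outside `K` that lies on a non-edge. If some vertex is adjacent to
all others, `K` is that vertex, and at most `2p` vertices lie on non-edges. Otherwise every vertex
lies on one of the `p ≤ n - 3` non-edges, so `n ≤ 2p`; the complement of `G`, having fewer than
`n - 1` edges, is disconnected, and two vertices in different components of it form a dominating
edge of `G`.
-/

open SimpleGraph

/-- A walk in a total-colored graph is *total monochromatic* if all of its edges and
internal vertices have the same color. -/
def IsTotalMonoWalk {V : Type*} {G : SimpleGraph V} (ce : Sym2 V → ℕ) (cv : V → ℕ)
    {u v : V} (w : G.Walk u v) : Prop :=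
  ∃ c, (∀ e ∈ w.edges, ce e = c) ∧ ∀ x ∈ w.support.tail.dropLast, cv x = c

/-- A total coloring (edge coloring `ce`, vertex coloring `cv`) of `G` is a
*TMC-coloring* if any two vertices are connected by a total monochromatic path. -/
def IsTMCColoring {V : Type*} (G : SimpleGraph V) (ce : Sym2 V → ℕ) (cv : V → ℕ) : Prop :=
  ∀ u v : V, u ≠ v → ∃ w : G.Walk u v, w.IsPath ∧ IsTotalMonoWalk ce cv w

/-- The number of colors used by a total coloring of `G`:
colors appearing on edges of `G` together with colors appearing on vertices. -/
noncomputable def colorsUsed {V : Type*} (G : SimpleGraph V) (ce : Sym2 V → ℕ) (cv : V → ℕ) : ℕ :=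
  (ce '' G.edgeSet ∪ Set.range cv).ncard

/-- The total monochromatic connection number `tmc G`: the maximum number of colors
used in a TMC-coloring of `G`. -/
noncomputable def tmc {V : Type*} [Fintype V] (G : SimpleGraph V) : ℕ :=
  sSup {k | ∃ ce cv, IsTMCColoring G ce cv ∧ colorsUsed G ce cv = k}

section

variable {V : Type*}

def JoinedThrough (G : SimpleGraph V) (CE : Set (Sym2 V)) (CV : Set V) (u v : V) : Prop :=
  ∃ w : G.Walk u v, w.IsPath ∧ (∀ e ∈ w.edges, e ∈ CE) ∧
    ∀ x ∈ w.support.tail.dropLast, x ∈ CV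

namespace JoinedThrough

variable {G : SimpleGraph V} {CE : Set (Sym2 V)} {CV : Set V}

lemma symm {u v : V} (h : JoinedThrough G CE CV u v) : JoinedThrough G CE CV v u := by
  obtain ⟨w, hw, hE, hV⟩ := h
  refine ⟨w.reverse, hw.reverse, fun e he => hE e (by simpa using he), fun x hx => hV x ?_⟩
  rwa [Walk.support_reverse, List.tail_reverse, List.dropLast_reverse, List.mem_reverse,
    List.tail_dropLast] at hx

lemma of_adj_adj {u x v : V} (huv : u ≠ v) (hux : G.Adj u x) (hxv : G.Adj x v)
    (hux' : s(u, x) ∈ CE) (hxv' : s(x, v) ∈ CE) (hx : x ∈ CV) : JoinedThrough G CE CV u v :=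
  ⟨.cons hux (.cons hxv .nil), by simp [Walk.isPath_def, huv, hux.ne, hxv.ne],
    by simp [hux', hxv'], by simp [hx]⟩

lemma of_adj_adj_adj {u x y v : V} (huy : u ≠ y) (hxv : x ≠ v) (huv : u ≠ v)
    (hux : G.Adj u x) (hxy : G.Adj x y) (hyv : G.Adj y v)
    (hux' : s(u, x) ∈ CE) (hxy' : s(x, y) ∈ CE) (hyv' : s(y, v) ∈ CE) (hx : x ∈ CV)
    (hy : y ∈ CV) : JoinedThrough G CE CV u v :=
  ⟨.cons hux (.cons hxy (.cons hyv .nil)),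
    by simp [Walk.isPath_def, huy, hxv, huv, hux.ne, hxy.ne, hyv.ne],
    by simp [hux', hxy', hyv'], by simp [hx, hy]⟩

end JoinedThrough

def cliqueSpokeEdges [DecidableEq V] (K : Finset V) (f : V → V) (S : Set V) : Set (Sym2 V) :=
  ↑(K.offDiag.image Sym2.mk.uncurry) ∪ (fun a => s(a, f a)) '' (S \ K)

lemma ncard_cliqueSpokeEdges_le [Finite V] [DecidableEq V] (K : Finset V) (f : V → V)
    (S : Set V) : (cliqueSpokeEdges K f S).ncard ≤ K.card.choose 2 + (S \ K).ncard := by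
  grw [cliqueSpokeEdges, Set.ncard_union_le, Set.ncard_coe_finset, Sym2.card_image_offDiag,
    Set.ncard_image_le]

lemma JoinedThrough.of_isClique [DecidableEq V] {G : SimpleGraph V} {K : Finset V}
    (hK : G.IsClique (K : Set V)) {f : V → V} (hf : ∀ a ∉ K, f a ∈ K ∧ G.Adj a (f a))
    {u v : V} (huv : u ≠ v) (hnadj : ¬G.Adj u v) :
    JoinedThrough G (cliqueSpokeEdges K f Gᶜ.support) K u v := by
  have hKE : ∀ x ∈ K, ∀ y ∈ K, x ≠ y → s(x, y) ∈ cliqueSpokeEdges K f Gᶜ.support :=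
    fun x hx y hy hxy => Or.inl (Finset.mem_image_of_mem _ (Finset.mem_offDiag.2 ⟨hx, hy, hxy⟩))
  have hfE : ∀ a ∈ Gᶜ.support, a ∉ K → s(a, f a) ∈ cliqueSpokeEdges K f Gᶜ.support :=
    fun a ha haK => Or.inr ⟨a, ⟨ha, haK⟩, rfl⟩
  have hu : u ∈ Gᶜ.support := ⟨v, (compl_adj G u v).2 ⟨huv, hnadj⟩⟩
  have hv : v ∈ Gᶜ.support := ⟨u, (compl_adj G v u).2 ⟨huv.symm, fun h => hnadj h.symm⟩⟩
  have of_mem_left : ∀ x y, x ≠ y → ¬G.Adj x y → x ∈ K → y ∈ Gᶜ.support →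
      JoinedThrough G (cliqueSpokeEdges K f Gᶜ.support) K x y := by
    intro x y hxy hnxy hxK hyS
    have hyK : y ∉ K := fun hyK => hnxy (hK hxK hyK hxy)
    obtain ⟨hfyK, hyfy⟩ := hf y hyK
    have hxfy : x ≠ f y := by rintro rfl; exact hnxy hyfy.symm
    exact .of_adj_adj hxy (hK hxK hfyK hxfy) hyfy.symm (hKE x hxK _ hfyK hxfy)
      (Sym2.eq_swap ▸ hfE y hyS hyK) hfyK
  by_cases huK : u ∈ K
  · exact of_mem_left u v huv hnadj huK hv
  by_cases hvK : v ∈ K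
  · exact (of_mem_left v u huv.symm (fun h => hnadj h.symm) hvK hu).symm
  obtain ⟨hfuK, hufu⟩ := hf u huK
  obtain ⟨hfvK, hvfv⟩ := hf v hvK
  by_cases hfuv : f u = f v
  · exact .of_adj_adj huv hufu (hfuv ▸ hvfv.symm) (hfE u hu huK)
      (hfuv ▸ Sym2.eq_swap ▸ hfE v hv hvK) hfuK
  · exact .of_adj_adj_adj (ne_of_mem_of_not_mem hfvK huK).symm (ne_of_mem_of_not_mem hfuK hvK)
      huv hufu (hK hfuK hfvK hfuv) hvfv.symm (hfE u hu huK) (hKE _ hfuK _ hfvK hfuv)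
      (Sym2.eq_swap ▸ hfE v hv hvK) hfuK hfvK

section Coloring

variable [Fintype V] {G : SimpleGraph V}

lemma colorsUsed_le_tmc {ce : Sym2 V → ℕ} {cv : V → ℕ} (h : IsTMCColoring G ce cv) :
    colorsUsed G ce cv ≤ tmc G := by
  refine le_csSup ⟨Fintype.card (Sym2 V) + Fintype.card V, ?_⟩ ⟨ce, cv, h, rfl⟩
  rintro _ ⟨ce', cv', -, rfl⟩
  calc colorsUsed G ce' cv'
      ≤ (ce' '' G.edgeSet).ncard + (Set.range cv').ncard := Set.ncard_union_le _ _
    _ ≤ G.edgeSet.ncard + (Set.univ : Set V).ncard := by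
      rw [← Set.image_univ]
      exact add_le_add (Set.ncard_image_le) (Set.ncard_image_le)
    _ ≤ Fintype.card (Sym2 V) + Fintype.card V := by
      rw [Set.ncard_univ, Nat.card_eq_fintype_card, ← Nat.card_eq_fintype_card (α := Sym2 V)]
      exact add_le_add_left (Set.ncard_le_card _) _

lemma le_tmc_of_forall_joinedThrough (CE : Set (Sym2 V)) (CV : Set V) (hCV : CV.Nonempty)
    (hjoin : ∀ u v, u ≠ v → ¬G.Adj u v → JoinedThrough G CE CV u v) :
    G.edgeSet.ncard + Fintype.card V + 1 ≤ tmc G + CE.ncard + CV.ncard := by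
  classical
  obtain ⟨κ, hκ⟩ := Countable.exists_injective_nat (Sym2 V)
  obtain ⟨ι, hι⟩ := Countable.exists_injective_nat V
  -- The core `CE ∪ CV` gets colour `0`; every other element gets a colour of its own.
  let ce : Sym2 V → ℕ := fun e => if e ∈ CE then 0 else 2 * κ e + 1
  let cv : V → ℕ := fun v => if v ∈ CV then 0 else 2 * ι v + 2
  have hTMC : IsTMCColoring G ce cv := by
    intro u v huv
    by_cases hadj : G.Adj u v
    · exact ⟨.cons hadj .nil, by simp [Walk.isPath_def, huv], ce s(u, v), by simp, by simp⟩
    · obtain ⟨w, hw, hE, hV⟩ := hjoin u v huv hadj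
      exact ⟨w, hw, 0, fun e he => if_pos (hE e he), fun x hx => if_pos (hV x hx)⟩
  let S₁ := (fun e => 2 * κ e + 1) '' (G.edgeSet \ CE)
  let S₂ := (fun v => 2 * ι v + 2) '' CVᶜ
  have hsub : insert 0 (S₁ ∪ S₂) ⊆ ce '' G.edgeSet ∪ Set.range cv := by
    rintro _ (rfl | ⟨e, ⟨he, heCE⟩, rfl⟩ | ⟨v, hv, rfl⟩)
    · obtain ⟨v, hv⟩ := hCV
      exact Or.inr ⟨v, if_pos hv⟩
    · exact Or.inl ⟨e, he, if_neg heCE⟩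
    · exact Or.inr ⟨v, if_neg hv⟩
  have hS₁ : S₁.ncard = (G.edgeSet \ CE).ncard :=
    Set.ncard_image_of_injective _ fun a b (h : 2 * κ a + 1 = 2 * κ b + 1) => hκ (by omega)
  have hS₂ : S₂.ncard = CVᶜ.ncard :=
    Set.ncard_image_of_injective _ fun a b (h : 2 * ι a + 2 = 2 * ι b + 2) => hι (by omega)
  have hdisj : Disjoint S₁ S₂ := by
    rw [Set.disjoint_left]
    rintro _ ⟨e, -, rfl⟩ ⟨v, -, (h : 2 * ι v + 2 = 2 * κ e + 1)⟩
    omega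
  have h0 : 0 ∉ S₁ ∪ S₂ := by
    rintro (⟨e, -, (h : 2 * κ e + 1 = 0)⟩ | ⟨v, -, (h : 2 * ι v + 2 = 0)⟩) <;> omega
  have hcount : 1 + (G.edgeSet \ CE).ncard + CVᶜ.ncard ≤ colorsUsed G ce cv := by
    rw [← hS₁, ← hS₂, add_assoc, ← Set.ncard_union_eq hdisj, add_comm,
      ← Set.ncard_insert_of_notMem h0]
    exact Set.ncard_le_ncard hsub
  have hE : G.edgeSet.ncard - CE.ncard ≤ (G.edgeSet \ CE).ncard := Set.le_ncard_sdiff _ _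
  have hV : CVᶜ.ncard + CV.ncard = Fintype.card V := by
    rw [Set.ncard_compl_add_ncard, Nat.card_eq_fintype_card]
  have hCVle : CV.ncard ≤ Fintype.card V := by omega
  have := colorsUsed_le_tmc hTMC
  omega

lemma le_tmc_of_isClique [DecidableEq V] {K : Finset V} (hKne : K.Nonempty)
    (hK : G.IsClique (K : Set V)) (hdom : ∀ a ∉ K, ∃ c ∈ K, G.Adj a c) :
    G.edgeSet.ncard + Fintype.card V + 1 ≤
      tmc G + K.card.choose 2 + (Gᶜ.support \ K).ncard + K.card := by
  choose! f hfK hf using hdom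
  have := le_tmc_of_forall_joinedThrough _ (K : Set V) (by simpa using hKne)
    fun _ _ huv hnadj => .of_isClique hK (fun a ha => ⟨hfK a ha, hf a ha⟩) huv hnadj
  have := ncard_cliqueSpokeEdges_le K f Gᶜ.support
  rw [Set.ncard_coe_finset] at *
  omega

end Coloring

namespace SimpleGraph

lemma ncard_edgeSet_add_ncard_edgeSet_compl [Fintype V] (G : SimpleGraph V) :
    G.edgeSet.ncard + Gᶜ.edgeSet.ncard = (Fintype.card V).choose 2 := by
  classical
  rw [← Set.ncard_union_eq (disjoint_edgeSet.2 disjoint_compl_right), ← edgeSet_sup,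
    sup_compl_eq_top, ← coe_edgeFinset, Set.ncard_coe_finset,
    card_edgeFinset_top_eq_card_choose_two]

lemma ncard_support_le [Fintype V] (G : SimpleGraph V) :
    G.support.ncard ≤ 2 * G.edgeSet.ncard := by
  classical
  calc G.support.ncard = G.support.toFinset.card := Set.ncard_eq_toFinset_card' _
    _ ≤ ∑ v ∈ G.support.toFinset, G.degree v := by
      rw [Finset.card_eq_sum_ones]
      exact Finset.sum_le_sum fun v hv => (G.degree_pos_iff_mem_support v).2 (by simpa using hv)
    _ ≤ ∑ v, G.degree v := Finset.sum_le_sum_of_subset (Finset.subset_univ _)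
    _ = 2 * G.edgeSet.ncard := by
      rw [sum_degrees_eq_twice_card_edges, ← Set.ncard_coe_finset, coe_edgeFinset]

lemma exists_dominating_edge_of_not_preconnected_compl {G : SimpleGraph V} [DecidableEq V]
    (h : ¬Gᶜ.Preconnected) :
    ∃ K : Finset V, K.card = 2 ∧ G.IsClique (K : Set V) ∧
      ∀ a ∉ K, ∃ c ∈ K, G.Adj a c := by
  obtain ⟨x, y, hxy⟩ : ∃ x y, ¬Gᶜ.Reachable x y := by simpa [Preconnected] using h
  have hne : x ≠ y := by rintro rfl; exact hxy .rfl
  have hadj : G.Adj x y := by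
    by_contra h
    exact hxy ((compl_adj G x y).2 ⟨hne, h⟩).reachable
  refine ⟨{x, y}, Finset.card_pair hne, by simpa [isClique_pair] using fun _ => hadj, ?_⟩
  intro a ha
  simp only [Finset.mem_insert, Finset.mem_singleton, not_or] at ha
  by_contra! hxa
  have hxa' : Gᶜ.Adj x a :=
    (compl_adj G x a).2 ⟨Ne.symm ha.1, fun h => hxa x (by simp) h.symm⟩
  have hay : Gᶜ.Adj a y := (compl_adj G a y).2 ⟨ha.2, hxa y (by simp)⟩
  exact hxy (hxa'.reachable.trans hay.reachable)

end SimpleGraph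

section Bounds

variable [Fintype V] {G : SimpleGraph V}

lemma le_tmc_of_notMem_support_compl {w : V} (hw : w ∉ Gᶜ.support) :
    G.edgeSet.ncard + Fintype.card V ≤ tmc G + Gᶜ.support.ncard := by
  classical
  have hdom : ∀ a ∉ ({w} : Finset V), ∃ c ∈ ({w} : Finset V), G.Adj a c := by
    refine fun a ha => ⟨w, Finset.mem_singleton_self w, ?_⟩
    by_contra h
    exact hw ⟨a, (compl_adj G w a).2 ⟨fun hwa => ha (by simp [hwa]), fun h' => h h'.symm⟩⟩
  have := le_tmc_of_isClique (Finset.singleton_nonempty w) (by simp) hdom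
  rw [Finset.coe_singleton, Set.sdiff_singleton_eq_self hw, Finset.card_singleton,
    Nat.choose_eq_zero_of_lt one_lt_two] at this
  omega

lemma le_tmc_of_not_preconnected_compl (h : ¬Gᶜ.Preconnected) : G.edgeSet.ncard ≤ tmc G := by
  classical
  obtain ⟨K, hK2, hK, hdom⟩ := exists_dominating_edge_of_not_preconnected_compl h
  have hbound := le_tmc_of_isClique (Finset.card_pos.1 (by omega)) hK hdom
  have hout : (Gᶜ.support \ K).ncard ≤ (K : Set V)ᶜ.ncard :=
    Set.ncard_le_ncard (Set.sdiff_subset_compl _ _)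
  rw [Set.ncard_compl, Set.ncard_coe_finset, Nat.card_eq_fintype_card, hK2] at hout
  rw [hK2, Nat.choose_self] at hbound
  have := hK2 ▸ K.card_le_univ
  omega

end Bounds

end

theorem stmt13_general {V : Type*} [Fintype V] (n p : ℕ) (hp : p + 3 ≤ n)
    (G : SimpleGraph V) (hn : Fintype.card V = n)
    (hm : G.edgeSet.ncard = n.choose 2 - p) :
    (2 * p ≤ n → (n.choose 2 : ℤ) + (n : ℤ) - 3 * (p : ℤ) ≤ (tmc G : ℤ)) ∧
    (n < 2 * p → (n.choose 2 : ℤ) - (p : ℤ) ≤ (tmc G : ℤ)) := by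
  subst hn
  have hcompl : Gᶜ.edgeSet.ncard ≤ p := by
    have := G.ncard_edgeSet_add_ncard_edgeSet_compl
    omega
  have hsupp : Gᶜ.support.ncard ≤ 2 * p := Gᶜ.ncard_support_le.trans (by omega)
  by_cases huniv : Gᶜ.support = Set.univ
  · rw [huniv, Set.ncard_univ, Nat.card_eq_fintype_card] at hsupp
    have hdisc : ¬Gᶜ.Preconnected := fun h => by
      have hV : Nonempty V := Fintype.card_pos_iff.1 (by omega)
      have := (connected_iff _).2 ⟨h, hV⟩ |>.card_vert_le_card_edgeSet_add_one
      rw [Nat.card_eq_fintype_card, Nat.card_coe_set_eq] at this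
      omega
    have := le_tmc_of_not_preconnected_compl hdisc
    constructor <;> intro <;> omega
  · obtain ⟨w, hw⟩ := Set.ne_univ_iff_exists_notMem _ |>.1 huniv
    have := le_tmc_of_notMem_support_compl hw
    have : Gᶜ.support.ncard ≤ Fintype.card V := by
      simpa only [Nat.card_eq_fintype_card] using Set.ncard_le_card Gᶜ.support
    constructor <;> intro <;> omega

theorem stmt13 {V : Type*} [Fintype V] (n p : ℕ) (hp : p + 3 ≤ n)
    (G : SimpleGraph V) (hG : G.Connected) (hn : Fintype.card V = n)
    (hm : G.edgeSet.ncard = n.choose 2 - p) :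
    (2 * p ≤ n → (n.choose 2 : ℤ) + (n : ℤ) - 3 * (p : ℤ) ≤ (tmc G : ℤ)) ∧
    (n < 2 * p → (n.choose 2 : ℤ) - (p : ℤ) ≤ (tmc G : ℤ)) :=
  stmt13_general n p hp G hn hm
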